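/- Let (X,τ) be a metrizable locally solid vector lattice. Then the unbounded topology uτ is metrizable if and only if there is an at most countable set A ⊆ X such that the τ-closure of the ideal I(A) generated by A is all of X. -/

import Mathlib

open Filter Set Topology

variable {X : Type*} [Lattice X] [AddCommGroup X] [Module ℝ X]
  [CovariantClass X X (· + ·) (· ≤ ·)] [PosSMulMono ℝ X]

/-- The Archimedean property for a lattice-ordered group. -/
def VLArchimedean (X : Type*) [Lattice X] [AddCommGroup X] : Prop :=
  ∀ x y : X, 0 ≤ x → (∀ n : ℕ, n • x ≤ y) → x = 0

/-- A set is solid if `x ∈ S` and `|y| ≤ |x|` imply `y ∈ S`. -/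
def IsSolid (S : Set X) : Prop := ∀ ⦃x y : X⦄, x ∈ S → |y| ≤ |x| → y ∈ S

/-- A locally solid (linear) topology on a vector lattice. -/
def IsLocallySolidTop (τ : TopologicalSpace X) : Prop :=
  @IsTopologicalAddGroup X τ _ ∧ @ContinuousSMul ℝ X _ _ τ ∧
    ∀ U ∈ @nhds X τ 0, ∃ V ∈ @nhds X τ 0, IsSolid V ∧ V ⊆ U

/-- An order ideal: a solid linear subspace. -/
def IsOrderIdeal (A : Set X) : Prop :=
  0 ∈ A ∧ (∀ x ∈ A, ∀ y ∈ A, x + y ∈ A) ∧ (∀ (c : ℝ), ∀ x ∈ A, c • x ∈ A) ∧ IsSolid A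

/-- The order ideal generated by a set. -/
def idealGenerated (A : Set X) : Set X := ⋂₀ {I | IsOrderIdeal I ∧ A ⊆ I}

/-- A band: an order ideal closed under existing suprema. -/
def IsBand (B : Set X) : Prop :=
  IsOrderIdeal B ∧ ∀ D ⊆ B, ∀ x : X, IsLUB D x → x ∈ B

/-- The band generated by a set. -/
def bandGenerated (A : Set X) : Set X := ⋂₀ {B | IsBand B ∧ A ⊆ B}

/-- `A` is a countable order basis: `A` is at most countable and generates `X` as a band. -/
def CountableOrderBasis (A : Set X) : Prop := A.Countable ∧ bandGenerated A = Set.univ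

/-- The neighbourhood filter of zero of the unbounded topology `u_A τ`:
generated by the sets `{x : |x| ⊓ a ∈ U}` for `U` a `τ`-neighbourhood of zero, `a ∈ A₊`. -/
def unbNhdsZero (τ : TopologicalSpace X) (A : Set X) : Filter X :=
  ⨅ a ∈ {a ∈ A | 0 ≤ a}, Filter.comap (fun x => |x| ⊓ a) (@nhds X τ 0)

/-- The unbounded topology `u_A τ` induced by the ideal `A`; `u τ = unbTopology τ Set.univ`. -/
def unbTopology (τ : TopologicalSpace X) (A : Set X) : TopologicalSpace X :=
  TopologicalSpace.mkOfNhds fun x => Filter.map (x + ·) (unbNhdsZero τ A)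

/-- A sublattice/ideal is order dense if every nonzero positive vector dominates a
nonzero positive vector of it. -/
def OrderDense (A : Set X) : Prop := ∀ x : X, 0 < x → ∃ y ∈ A, 0 < y ∧ y ≤ x

/-- A minimal topology: a Hausdorff locally solid topology with no strictly coarser
Hausdorff locally solid topology. (In Mathlib's order on `TopologicalSpace`,
`τ ≤ σ` means `τ` is finer than `σ`.) -/
def IsMinimalTop (τ : TopologicalSpace X) : Prop :=
  IsLocallySolidTop τ ∧ @T2Space X τ ∧
    ∀ σ : TopologicalSpace X, IsLocallySolidTop σ → @T2Space X σ → τ ≤ σ → σ = τ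

/-- The countable sup property. -/
def CountableSupProperty (Y : Type*) [Lattice Y] : Prop :=
  ∀ S : Set Y, ∀ x : Y, S.Nonempty → IsLUB S x → ∃ C ⊆ S, C.Countable ∧ IsLUB C x

/-- Order convergence to zero of a net: there is a downward directed set `D` with
infimum `0`, each member of which eventually dominates `|x α|`. -/
def OrderNull {ι : Type*} [Preorder ι] (x : ι → X) : Prop :=
  ∃ D : Set X, D.Nonempty ∧ (∀ a ∈ D, ∀ b ∈ D, ∃ c ∈ D, c ≤ a ∧ c ≤ b) ∧
    IsGLB D 0 ∧ ∀ d ∈ D, ∃ α₀ : ι, ∀ α, α₀ ≤ α → |x α| ≤ d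

/-- Unbounded order (uo-) convergence to zero of a net. -/
def UoNull {ι : Type*} [Preorder ι] (x : ι → X) : Prop :=
  ∀ u : X, 0 ≤ u → OrderNull (fun α => |x α| ⊓ u)

/-- A set is topologically bounded if it is absorbed by every neighbourhood of zero. -/
def TopBounded (τ : TopologicalSpace X) (S : Set X) : Prop :=
  ∀ U ∈ @nhds X τ 0, ∃ l : ℝ, 0 < l ∧ ∀ x ∈ S, l • x ∈ U

/-- A locally bounded topology: it has a topologically bounded neighbourhood of zero. -/
def LocallyBoundedTop (τ : TopologicalSpace X) : Prop :=
  ∃ V ∈ @nhds X τ 0, TopBounded τ V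

/-- A submetrizable topology: finer than some metrizable linear topology.
(In Mathlib's order on `TopologicalSpace`, `τ ≤ σ` means `τ` is finer than `σ`.) -/
def Submetrizable (τ : TopologicalSpace X) : Prop :=
  ∃ σ : TopologicalSpace X, @IsTopologicalAddGroup X σ _ ∧ @ContinuousSMul ℝ X _ _ σ ∧
    @TopologicalSpace.MetrizableSpace X σ ∧ τ ≤ σ

/-- A Riesz submetrizable topology: finer than some metrizable locally solid topology. -/
def RieszSubmetrizable (τ : TopologicalSpace X) : Prop :=
  ∃ σ : TopologicalSpace X, IsLocallySolidTop σ ∧ @TopologicalSpace.MetrizableSpace X σ ∧ τ ≤ σ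

/-- Dedekind (order) completeness. -/
def DedekindComplete (Y : Type*) [Lattice Y] : Prop :=
  ∀ S : Set Y, S.Nonempty → BddAbove S → ∃ x, IsLUB S x

/-- Lateral completeness: every nonempty set of pairwise disjoint positive vectors
has a supremum. -/
def LaterallyComplete (Y : Type*) [Lattice Y] [AddCommGroup Y] : Prop :=
  ∀ S : Set Y, S.Nonempty → (∀ x ∈ S, 0 ≤ x) → (S.Pairwise fun a b => a ⊓ b = 0) →
    ∃ x, IsLUB S x

/-!
The sets `{x : |x| ∧ u ∈ V}`, with `u ≥ 0` and `V` a solid `τ`-neighbourhood of zero, form a base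
of `uτ` at zero, and `uτ` is a Hausdorff group topology; so `uτ` is metrizable exactly when this
base can be chosen countable.

If the ideal generated by a countable `A` is dense, it is dominated by countably many positive
vectors `c`, and the basic sets with `u = c` already form a base: `|x| ∧ u ≤ |x| ∧ |y| + |u - y|`,
where `|y| ≤ c` and `y` is `τ`-close to `u`.

Conversely, given a countable base indexed by pairs `(aₙ, Vₙ)`, every `z ≥ 0` is approximated by
`z ∧ k aₙ ∈ I({aₙ})`: the remainder `(z - k aₙ)⁺` satisfies `k ((z - k aₙ)⁺ ∧ aₙ) ≤ z`, so it is
`uτ`-small, and being below `z` it is then `τ`-small.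
-/

section LatticeOrderedGroup

variable {E : Type*} [Lattice E] [AddCommGroup E] [AddLeftMono E]

lemma eq_zero_of_abs_eq_zero {v : E} (h : |v| = 0) : v = 0 :=
  le_antisymm ((le_abs_self v).trans h.le) (neg_nonpos.1 ((neg_le_abs v).trans h.le))

lemma inf_add_le_inf_add {a b c : E} (hc : 0 ≤ c) : a ⊓ (b + c) ≤ a ⊓ b + c := by
  rw [inf_add]
  exact inf_le_inf_right _ (le_add_of_nonneg_right hc)

lemma add_inf_le_add_inf {a b c : E} (ha : 0 ≤ a) (hb : 0 ≤ b) (hc : 0 ≤ c) :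
    (b + c) ⊓ a ≤ b ⊓ a + c ⊓ a := by
  rw [add_inf, inf_add, inf_add]
  refine le_inf (le_inf inf_le_left ?_) (le_inf ?_ ?_) <;> refine inf_le_right.trans ?_
  · exact le_add_of_nonneg_right hc
  · exact le_add_of_nonneg_left hb
  · exact le_add_of_nonneg_left ha

lemma abs_add_inf_le {y z a : E} (ha : 0 ≤ a) : |y + z| ⊓ a ≤ |y| ⊓ a + |z| ⊓ a :=
  (inf_le_inf_right a (abs_add_le y z)).trans (add_inf_le_add_inf ha (abs_nonneg y) (abs_nonneg z))

lemma abs_inf_le_abs_inf_abs_add_abs_sub (x y u : E) : |x| ⊓ u ≤ |x| ⊓ |y| + |u - y| :=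
  calc |x| ⊓ u = |x| ⊓ (y + (u - y)) := by rw [add_sub_cancel]
    _ ≤ |x| ⊓ (|y| + |u - y|) := inf_le_inf_left _ (add_le_add (le_abs_self _) (le_abs_self _))
    _ ≤ |x| ⊓ |y| + |u - y| := inf_add_le_inf_add (abs_nonneg _)

lemma posPart_add_le_posPart_add {b d u : E} (hu : 0 ≤ u) (hdb : d ≤ b⁺) (hdu : d ≤ u) :
    b⁺ + d ≤ (b + u)⁺ := by
  rw [posPart_def, posPart_def, sup_add, zero_add]
  exact sup_le (le_sup_of_le_left (add_le_add le_rfl hdu))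
    (hdb.trans (sup_le_sup_right (le_add_of_nonneg_right hu) 0))

/-- `d = (x - k a)⁺ ∧ a` satisfies `(x - (j + 1) a)⁺ + d ≤ (x - j a)⁺` for `j < k`;
summing these telescopes to the bound. -/
lemma nsmul_posPart_sub_nsmul_inf_le {x a : E} (hx : 0 ≤ x) (ha : 0 ≤ a) (k : ℕ) :
    k • ((x - k • a)⁺ ⊓ a) ≤ x := by
  set d := (x - k • a)⁺ ⊓ a
  have hd : ∀ j ≤ k, d ≤ (x - j • a)⁺ := fun j hj =>
    inf_le_left.trans (posPart_mono (sub_le_sub_left (nsmul_le_nsmul_left ha hj) x))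
  have telescope : ∀ j ≤ k, (x - j • a)⁺ + j • d ≤ x := by
    intro j
    induction j with
    | zero => simp [posPart_eq_self.2 hx]
    | succ j ih =>
      intro hj
      have step : (x - (j + 1) • a)⁺ + d ≤ (x - j • a)⁺ := by
        have h := posPart_add_le_posPart_add ha (hd (j + 1) hj) inf_le_right
        rw [succ_nsmul, ← sub_sub] at h ⊢
        rwa [sub_add_cancel] at h
      calc (x - (j + 1) • a)⁺ + (j + 1) • d
          = ((x - (j + 1) • a)⁺ + d) + j • d := by rw [succ_nsmul' d, add_assoc]
        _ ≤ (x - j • a)⁺ + j • d := add_le_add step le_rfl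
        _ ≤ x := ih (Nat.le_of_succ_le hj)
  exact (le_add_of_nonneg_left (posPart_nonneg _)).trans (telescope k le_rfl)

end LatticeOrderedGroup

section VectorLattice

variable {E : Type*} [Lattice E] [AddCommGroup E] [Module ℝ E]

lemma isOrderIdeal_idealGenerated (A : Set E) : IsOrderIdeal (idealGenerated A) :=
  ⟨fun _ hI => hI.1.1,
    fun _ hx _ hy I hI => hI.1.2.1 _ (hx I hI) _ (hy I hI),
    fun c _ hx I hI => hI.1.2.2.1 c _ (hx I hI),
    fun _ _ hx hxy I hI => hI.1.2.2.2 (hx I hI) hxy⟩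

lemma subset_idealGenerated (A : Set E) : A ⊆ idealGenerated A :=
  fun _ ha _ hI => hI.2 ha

lemma idealGenerated_subset {A J : Set E} (hJ : IsOrderIdeal J) (hA : A ⊆ J) :
    idealGenerated A ⊆ J :=
  fun _ hx => hx J ⟨hJ, hA⟩

lemma sub_mem_idealGenerated {A : Set E} {x y : E} (hx : x ∈ idealGenerated A)
    (hy : y ∈ idealGenerated A) : x - y ∈ idealGenerated A := by
  have hI := isOrderIdeal_idealGenerated A
  simpa [sub_eq_add_neg] using hI.2.1 x hx _ (hI.2.2.1 (-1) y hy)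

lemma mem_idealGenerated_of_abs_le_nsmul [AddLeftMono E] {A : Set E} {a y : E} (ha : a ∈ A)
    (ha₀ : 0 ≤ a) {k : ℕ} (h : |y| ≤ k • a) : y ∈ idealGenerated A := by
  refine (isOrderIdeal_idealGenerated A).2.2.2
    ((isOrderIdeal_idealGenerated A).2.2.1 k a (subset_idealGenerated A ha)) ?_
  rwa [Nat.cast_smul_eq_nsmul, abs_of_nonneg (nsmul_nonneg ha₀ k)]

section PosSMulMono

variable [PosSMulMono ℝ E]

lemma smul_le_abs_smul_abs (r : ℝ) (x : E) : r • x ≤ |r| • |x| := by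
  rcases le_or_gt 0 r with hr | hr
  · rw [abs_of_nonneg hr]
    exact smul_le_smul_of_nonneg_left (le_abs_self x) hr
  · rw [abs_of_neg hr, ← neg_smul_neg]
    exact smul_le_smul_of_nonneg_left (neg_le_abs x) (neg_nonneg.2 hr.le)

lemma abs_smul_le (r : ℝ) (x : E) : |r • x| ≤ |r| • |x| :=
  abs_le'.2 ⟨smul_le_abs_smul_abs r x, by simpa using smul_le_abs_smul_abs (-r) x⟩

variable [AddLeftMono E]

lemma isOrderIdeal_setOf_abs_le_nsmul {g : ℕ → E} (hg : Monotone g) (hg₀ : ∀ n, 0 ≤ g n) :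
    IsOrderIdeal {y : E | ∃ p : ℕ × ℕ, |y| ≤ p.1 • g p.2} := by
  refine ⟨⟨(0, 0), by simp⟩, ?_, ?_, fun x y ⟨p, hp⟩ hxy => ⟨p, hxy.trans hp⟩⟩
  · rintro x ⟨⟨n, m⟩, hx⟩ y ⟨⟨n', m'⟩, hy⟩
    refine ⟨(n + n', max m m'), ?_⟩
    calc |x + y| ≤ n • g m + n' • g m' := (abs_add_le x y).trans (add_le_add hx hy)
      _ ≤ n • g (max m m') + n' • g (max m m') := add_le_add
          (nsmul_le_nsmul_right (hg (le_max_left m m')) n)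
          (nsmul_le_nsmul_right (hg (le_max_right m m')) n')
      _ = (n + n') • g (max m m') := (add_nsmul _ _ _).symm
  · rintro r x ⟨⟨n, m⟩, hx⟩
    refine ⟨(⌈|r|⌉₊ * n, m), ?_⟩
    calc |r • x| ≤ |r| • (n • g m) :=
          (abs_smul_le r x).trans (smul_le_smul_of_nonneg_left hx (abs_nonneg r))
      _ ≤ (⌈|r|⌉₊ : ℝ) • (n • g m) := by
          rw [← sub_nonneg, ← sub_smul]
          exact smul_nonneg (sub_nonneg.2 (Nat.le_ceil _)) (nsmul_nonneg (hg₀ m) n)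
      _ = (⌈|r|⌉₊ * n) • g m := by rw [Nat.cast_smul_eq_nsmul, mul_nsmul']

/-- `C` consists of the multiples of the partial sums of `|a₀| + |a₁| + ⋯` for an enumeration
of `A ∪ {0}`. -/
lemma exists_countable_dominating_idealGenerated {A : Set E} (hA : A.Countable) :
    ∃ C : Set E, C.Countable ∧ (∀ c ∈ C, 0 ≤ c) ∧ ∀ y ∈ idealGenerated A, ∃ c ∈ C, |y| ≤ c := by
  obtain ⟨f, hf⟩ := (hA.insert 0).exists_eq_range (insert_nonempty 0 A)
  set g : ℕ → E := fun n => ∑ i ∈ Finset.range n, |f i|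
  have hg₀ : ∀ n, 0 ≤ g n := fun n => Finset.sum_nonneg fun i _ => abs_nonneg (f i)
  have hg : Monotone g := monotone_nat_of_le_succ fun n => by
    simp only [g, Finset.sum_range_succ]
    exact le_add_of_nonneg_right (abs_nonneg _)
  have hAJ : A ⊆ {y : E | ∃ p : ℕ × ℕ, |y| ≤ p.1 • g p.2} := by
    intro x hx
    obtain ⟨i, rfl⟩ : x ∈ range f := hf ▸ mem_insert_of_mem 0 hx
    refine ⟨(1, i + 1), ?_⟩
    simpa [g, Finset.sum_range_succ] using hg₀ i
  refine ⟨range fun p : ℕ × ℕ => p.1 • g p.2, countable_range _,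
    forall_mem_range.2 fun p => nsmul_nonneg (hg₀ p.2) p.1, fun y hy => ?_⟩
  obtain ⟨p, hp⟩ := idealGenerated_subset (isOrderIdeal_setOf_abs_le_nsmul hg hg₀) hAJ hy
  exact ⟨_, mem_range_self p, hp⟩

end PosSMulMono

end VectorLattice

section UnboundedTopology

variable {E : Type*} [Lattice E] [AddCommGroup E] [τ : TopologicalSpace E]

lemma preimage_mem_unbNhdsZero {A : Set E} {a : E} (ha : a ∈ A) (ha₀ : 0 ≤ a) {V : Set E}
    (hV : V ∈ 𝓝 0) : (fun x => |x| ⊓ a) ⁻¹' V ∈ unbNhdsZero τ A :=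
  mem_iInf_of_mem a (mem_iInf_of_mem ⟨ha, ha₀⟩ (preimage_mem_comap hV))

lemma unbNhdsZero_anti {A B : Set E} (h : A ⊆ B) : unbNhdsZero τ B ≤ unbNhdsZero τ A :=
  biInf_mono fun _ ha => ⟨h ha.1, ha.2⟩

lemma tendsto_neg_unbNhdsZero (A : Set E) :
    Tendsto Neg.neg (unbNhdsZero τ A) (unbNhdsZero τ A) := by
  simp only [unbNhdsZero, tendsto_iInf, tendsto_comap_iff]
  intro a ha
  simpa [Function.comp_def, abs_neg] using tendsto_iInf' a (tendsto_iInf' ha tendsto_comap)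

variable [AddLeftMono E]

lemma pure_zero_le_unbNhdsZero (A : Set E) : pure 0 ≤ unbNhdsZero τ A :=
  le_iInf₂ fun a ha => by
    rw [← map_le_iff_le_comap, map_pure, abs_zero, inf_eq_left.2 ha.2]
    exact pure_le_nhds 0

lemma comap_abs_inf_le_of_le (hsolid : (𝓝 (0 : E)).HasBasis (fun V => V ∈ 𝓝 0 ∧ IsSolid V) id)
    {a b : E} (ha : 0 ≤ a) (hab : a ≤ b) :
    comap (fun x => |x| ⊓ b) (𝓝 0) ≤ comap (fun x => |x| ⊓ a) (𝓝 0) := by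
  intro S hS
  obtain ⟨V, hV, hVS⟩ := mem_comap.1 hS
  obtain ⟨W, ⟨hW, hWsolid⟩, hWV⟩ := hsolid.mem_iff.1 hV
  refine mem_comap.2 ⟨W, hW, fun x hx => hVS (hWV (hWsolid hx ?_))⟩
  rw [abs_of_nonneg (le_inf (abs_nonneg x) ha),
    abs_of_nonneg (le_inf (abs_nonneg x) (ha.trans hab))]
  exact inf_le_inf_left _ hab

theorem hasBasis_unbNhdsZero (hsolid : (𝓝 (0 : E)).HasBasis (fun V => V ∈ 𝓝 0 ∧ IsSolid V) id) :
    (unbNhdsZero τ univ).HasBasis (fun p : E × Set E => 0 ≤ p.1 ∧ p.2 ∈ 𝓝 0 ∧ IsSolid p.2)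
      fun p => (fun x => |x| ⊓ p.1) ⁻¹' p.2 := by
  have hdir : DirectedOn ((fun a : E => comap (fun x => |x| ⊓ a) (𝓝 0)) ⁻¹'o (· ≥ ·))
      {a ∈ univ | 0 ≤ a} := by
    rintro a ⟨-, ha⟩ b ⟨-, hb⟩
    exact ⟨a ⊔ b, ⟨mem_univ _, le_sup_of_le_left ha⟩, comap_abs_inf_le_of_le hsolid ha le_sup_left,
      comap_abs_inf_le_of_le hsolid hb le_sup_right⟩
  refine ⟨fun S => ?_⟩
  rw [unbNhdsZero, mem_biInf_of_directed hdir ⟨0, mem_univ _, le_rfl⟩]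
  constructor
  · rintro ⟨a, ⟨-, ha⟩, hS⟩
    obtain ⟨V, hV, hVS⟩ := mem_comap.1 hS
    obtain ⟨W, hW, hWV⟩ := hsolid.mem_iff.1 hV
    exact ⟨(a, W), ⟨ha, hW⟩, fun x hx => hVS (hWV hx)⟩
  · rintro ⟨⟨a, W⟩, ⟨ha, hW, -⟩, hWS⟩
    exact ⟨a, ⟨mem_univ a, ha⟩, mem_of_superset (preimage_mem_comap hW) hWS⟩

variable [ContinuousAdd E]

lemma tendsto_add_unbNhdsZero
    (hsolid : (𝓝 (0 : E)).HasBasis (fun V => V ∈ 𝓝 0 ∧ IsSolid V) id) :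
    Tendsto (fun p : E × E => p.1 + p.2) (unbNhdsZero τ univ ×ˢ unbNhdsZero τ univ)
      (unbNhdsZero τ univ) := by
  refine (hasBasis_unbNhdsZero hsolid).tendsto_right_iff.2 fun ⟨a, V⟩ ⟨ha, hV, hVsolid⟩ => ?_
  obtain ⟨W, hW, hWV⟩ := exists_nhds_zero_half hV
  obtain ⟨W₀, ⟨hW₀, -⟩, hW₀W⟩ := hsolid.mem_iff.1 hW
  have hU := preimage_mem_unbNhdsZero (mem_univ a) ha hW₀
  filter_upwards [prod_mem_prod hU hU] with ⟨y, z⟩ ⟨hy, hz⟩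
  refine hVsolid (hWV _ (hW₀W hy) _ (hW₀W hz)) ?_
  rw [abs_of_nonneg (le_inf (abs_nonneg _) ha),
    abs_of_nonneg (add_nonneg (le_inf (abs_nonneg _) ha) (le_inf (abs_nonneg _) ha))]
  exact abs_add_inf_le ha

theorem nhds_unbTopology (hsolid : (𝓝 (0 : E)).HasBasis (fun V => V ∈ 𝓝 0 ∧ IsSolid V) id)
    (x : E) : @nhds E (unbTopology τ univ) x = map (x + ·) (unbNhdsZero τ univ) := by
  refine TopologicalSpace.nhds_mkOfNhds _ _ (fun z => ?_) fun z S hS => ?_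
  · simpa using map_mono (m := (z + ·)) (pure_zero_le_unbNhdsZero (τ := τ) univ)
  · rw [eventually_map]
    filter_upwards [((tendsto_add_unbNhdsZero hsolid).eventually hS).curry] with t ht
    rw [mem_map]
    simp only [add_assoc]
    exact ht

theorem nhds_zero_unbTopology
    (hsolid : (𝓝 (0 : E)).HasBasis (fun V => V ∈ 𝓝 0 ∧ IsSolid V) id) :
    @nhds E (unbTopology τ univ) 0 = unbNhdsZero τ univ := by
  simp [nhds_unbTopology hsolid]

theorem isTopologicalAddGroup_unbTopology
    (hsolid : (𝓝 (0 : E)).HasBasis (fun V => V ∈ 𝓝 0 ∧ IsSolid V) id) :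
    @IsTopologicalAddGroup E (unbTopology τ univ) _ := by
  refine @IsTopologicalAddGroup.of_comm_of_nhds_zero E _ (unbTopology τ univ) ?_ ?_ ?_
  · rw [nhds_zero_unbTopology hsolid]
    exact tendsto_add_unbNhdsZero hsolid
  · rw [nhds_zero_unbTopology hsolid]
    exact tendsto_neg_unbNhdsZero univ
  · intro x
    rw [nhds_zero_unbTopology hsolid, nhds_unbTopology hsolid]

theorem t0Space_unbTopology [T1Space E]
    (hsolid : (𝓝 (0 : E)).HasBasis (fun V => V ∈ 𝓝 0 ∧ IsSolid V) id) :
    @T0Space E (unbTopology τ univ) := by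
  refine @T0Space.mk E (unbTopology τ univ) fun x y hxy => ?_
  suffices |y - x| = 0 from (sub_eq_zero.1 (eq_zero_of_abs_eq_zero this)).symm
  refine pure_le_nhds_iff.1 fun V hV => ?_
  have hU : (fun z => |z - x| ⊓ |y - x|) ⁻¹' V ∈ @nhds E (unbTopology τ univ) x := by
    rw [nhds_unbTopology hsolid x, mem_map]
    simp only [preimage_preimage, add_sub_cancel_left]
    exact preimage_mem_unbNhdsZero (mem_univ _) (abs_nonneg (y - x)) hV
  have hnhds : @nhds E (unbTopology τ univ) x = @nhds E (unbTopology τ univ) y := hxy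
  have hy := @mem_of_mem_nhds E (unbTopology τ univ) y _ (hnhds ▸ hU)
  rwa [mem_preimage, inf_idem] at hy

end UnboundedTopology

theorem IsTopologicalAddGroup.metrizableSpace {G : Type*} [AddCommGroup G] [TopologicalSpace G]
    [IsTopologicalAddGroup G] [T0Space G] [(𝓝 (0 : G)).IsCountablyGenerated] :
    TopologicalSpace.MetrizableSpace G := by
  let := IsTopologicalAddGroup.rightUniformSpace G
  have := isUniformAddGroup_of_addCommGroup (G := G)
  have := IsUniformAddGroup.uniformity_countably_generated (α := G)
  exact UniformSpace.metrizableSpace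

section Metrizability

variable {E : Type*} [Lattice E] [AddCommGroup E] [τ : TopologicalSpace E]

lemma isCountablyGenerated_unbNhdsZero [(𝓝 (0 : E)).IsCountablyGenerated] {C : Set E}
    (hC : C.Countable) : (unbNhdsZero τ C).IsCountablyGenerated := by
  have : Countable {a ∈ C | 0 ≤ a} := (hC.mono (sep_subset _ _)).to_subtype
  rw [unbNhdsZero, iInf_subtype']
  infer_instance

variable [AddLeftMono E]

/-- Apply `hVW` to `x = (z - k a)⁺`: `x ∧ a ≤ z / k` lies in `V` for large `k`, and
`x ∧ z = x = z - z ∧ k a`. -/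
lemma exists_sub_inf_nsmul_mem [Module ℝ E] [PosSMulMono ℝ E] [ContinuousSMul ℝ E] {z a : E}
    (hz : 0 ≤ z) (ha : 0 ≤ a) {V W : Set E} (hV : V ∈ 𝓝 0) (hVsolid : IsSolid V)
    (hVW : (fun x => |x| ⊓ a) ⁻¹' V ⊆ (fun x => |x| ⊓ z) ⁻¹' W) :
    ∃ k : ℕ, z - z ⊓ k • a ∈ W := by
  obtain ⟨k, hkV, hk⟩ : ∃ k : ℕ, (k : ℝ)⁻¹ • z ∈ V ∧ 0 < k := by
    have h := (tendsto_inv_atTop_nhds_zero_nat (𝕜 := ℝ)).smul_const z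
    rw [zero_smul] at h
    exact ((h.eventually_mem hV).and (eventually_gt_atTop 0)).exists
  have hk' : (0 : ℝ) < k := Nat.cast_pos.2 hk
  refine ⟨k, ?_⟩
  set x := (z - k • a)⁺
  have hx₀ : 0 ≤ x := posPart_nonneg _
  have hxa : x ⊓ a ∈ V := hVsolid hkV <| by
    rw [abs_of_nonneg (le_inf hx₀ ha), abs_of_nonneg (smul_nonneg (inv_nonneg.2 hk'.le) hz)]
    calc x ⊓ a = (k : ℝ)⁻¹ • ((k : ℝ) • (x ⊓ a)) := (inv_smul_smul₀ hk'.ne' _).symm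
      _ ≤ (k : ℝ)⁻¹ • z := smul_le_smul_of_nonneg_left
          (by rw [Nat.cast_smul_eq_nsmul]; exact nsmul_posPart_sub_nsmul_inf_le hz ha k)
          (inv_nonneg.2 hk'.le)
  have hxz : x ≤ z := sup_le (sub_le_self z (nsmul_nonneg ha k)) hz
  have hxW := hVW (show |x| ⊓ a ∈ V by rwa [abs_of_nonneg hx₀])
  rw [mem_preimage, abs_of_nonneg hx₀, inf_eq_left.2 hxz] at hxW
  rwa [sub_inf, sub_self, sup_comm]

variable [IsTopologicalAddGroup E]

lemma unbNhdsZero_le_comap_of_mem_closure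
    (hsolid : (𝓝 (0 : E)).HasBasis (fun V => V ∈ 𝓝 0 ∧ IsSolid V) id) {C : Set E} {u : E}
    (hu₀ : 0 ≤ u) (hu : u ∈ closure {y | ∃ c ∈ C, 0 ≤ c ∧ |y| ≤ c}) :
    unbNhdsZero τ C ≤ comap (fun x => |x| ⊓ u) (𝓝 0) := by
  intro S hS
  obtain ⟨T, hT, hTS⟩ := mem_comap.1 hS
  obtain ⟨T', ⟨hT', hT'solid⟩, hT'T⟩ := hsolid.mem_iff.1 hT
  obtain ⟨W, hW, hWT'⟩ := exists_nhds_zero_half hT'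
  obtain ⟨W₀, ⟨hW₀, hW₀solid⟩, hW₀W⟩ := hsolid.mem_iff.1 hW
  obtain ⟨y, hyu, c, hc, hc₀, hyc⟩ :=
    mem_closure_iff_nhds.1 hu _ ((continuous_sub_right u).tendsto' u 0 (sub_self u) hW₀)
  refine mem_of_superset (preimage_mem_unbNhdsZero hc hc₀ hW₀) fun x hx => hTS (hT'T ?_)
  have hxy : |x| ⊓ |y| ∈ W₀ := hW₀solid hx <| by
    rw [abs_of_nonneg (le_inf (abs_nonneg x) (abs_nonneg y)),
      abs_of_nonneg (le_inf (abs_nonneg x) hc₀)]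
    exact inf_le_inf_left _ hyc
  have huy : |u - y| ∈ W₀ := hW₀solid hyu (by rw [abs_abs, abs_sub_comm])
  refine hT'solid (hWT' _ (hW₀W hxy) _ (hW₀W huy)) ?_
  rw [abs_of_nonneg (le_inf (abs_nonneg x) hu₀),
    abs_of_nonneg (add_nonneg (le_inf (abs_nonneg x) (abs_nonneg y)) (abs_nonneg _))]
  exact abs_inf_le_abs_inf_abs_add_abs_sub x y u

theorem unbNhdsZero_univ_eq_of_forall_mem_closure
    (hsolid : (𝓝 (0 : E)).HasBasis (fun V => V ∈ 𝓝 0 ∧ IsSolid V) id) {C : Set E}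
    (hC : ∀ u, 0 ≤ u → u ∈ closure {y | ∃ c ∈ C, 0 ≤ c ∧ |y| ≤ c}) :
    unbNhdsZero τ univ = unbNhdsZero τ C :=
  le_antisymm (unbNhdsZero_anti (subset_univ C))
    (le_iInf₂ fun u hu => unbNhdsZero_le_comap_of_mem_closure hsolid hu.2 (hC u hu.2))

variable [Module ℝ E]

lemma closure_idealGenerated_eq_univ_of_nonneg {A : Set E}
    (h : ∀ z, 0 ≤ z → z ∈ closure (idealGenerated A)) : closure (idealGenerated A) = univ :=
  eq_univ_of_forall fun x => by
    simpa [posPart_sub_negPart] using map_mem_closure₂ continuous_sub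
      (h _ (posPart_nonneg x)) (h _ (negPart_nonneg x)) fun _ hp _ hq =>
        sub_mem_idealGenerated hp hq

variable [PosSMulMono ℝ E]

theorem isCountablyGenerated_unbNhdsZero_univ [(𝓝 (0 : E)).IsCountablyGenerated]
    (hsolid : (𝓝 (0 : E)).HasBasis (fun V => V ∈ 𝓝 0 ∧ IsSolid V) id) {A : Set E}
    (hA : A.Countable) (hdense : closure (idealGenerated A) = univ) :
    (unbNhdsZero τ univ).IsCountablyGenerated := by
  obtain ⟨C, hC, hC₀, hdom⟩ := exists_countable_dominating_idealGenerated hA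
  have hclosure : ∀ u, 0 ≤ u → u ∈ closure {y | ∃ c ∈ C, 0 ≤ c ∧ |y| ≤ c} := by
    refine fun u _ => closure_mono (fun y hy => ?_) (hdense ▸ mem_univ u)
    obtain ⟨c, hc, hyc⟩ := hdom y hy
    exact ⟨c, hc, hC₀ c hc, hyc⟩
  rw [unbNhdsZero_univ_eq_of_forall_mem_closure hsolid hclosure]
  exact isCountablyGenerated_unbNhdsZero hC

theorem exists_countable_closure_idealGenerated_eq_univ [ContinuousSMul ℝ E]
    [(unbNhdsZero τ univ).IsCountablyGenerated]
    (hsolid : (𝓝 (0 : E)).HasBasis (fun V => V ∈ 𝓝 0 ∧ IsSolid V) id) :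
    ∃ A : Set E, A.Countable ∧ closure (idealGenerated A) = univ := by
  obtain ⟨p, hp, hbasis⟩ := (hasBasis_unbNhdsZero hsolid).exists_antitone_subbasis
  refine ⟨range fun n => (p n).1, countable_range _,
    closure_idealGenerated_eq_univ_of_nonneg fun z hz => mem_closure_iff_nhds.2 fun N hN => ?_⟩
  rw [← map_add_left_nhds_zero, mem_map] at hN
  obtain ⟨W, ⟨hW, hWsolid⟩, hWN⟩ := hsolid.mem_iff.1 hN
  obtain ⟨n, -, hn⟩ := hbasis.toHasBasis.mem_iff.1 (preimage_mem_unbNhdsZero (mem_univ z) hz hW)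
  obtain ⟨ha, hV, hVsolid⟩ := hp n
  obtain ⟨k, hk⟩ := exists_sub_inf_nsmul_mem hz ha hV hVsolid hn
  refine ⟨z ⊓ k • (p n).1, ?_, mem_idealGenerated_of_abs_le_nsmul (mem_range_self n) ha (k := k) ?_⟩
  · simpa using hWN (hWsolid hk (by rw [abs_sub_comm]) : z ⊓ k • (p n).1 - z ∈ W)
  · rw [abs_of_nonneg (le_inf hz (nsmul_nonneg ha k))]
    exact inf_le_right

end Metrizability

theorem stmt8_general (τ : TopologicalSpace X)
    (hτ : IsLocallySolidTop τ) (hmet : @TopologicalSpace.MetrizableSpace X τ) :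
    @TopologicalSpace.MetrizableSpace X (unbTopology τ Set.univ) ↔
      ∃ A : Set X, A.Countable ∧ @closure X τ (idealGenerated A) = Set.univ := by
  obtain ⟨_, _, hsolid⟩ := hτ
  replace hsolid : (𝓝 (0 : X)).HasBasis (fun V => V ∈ 𝓝 0 ∧ IsSolid V) id :=
    hasBasis_self.2 hsolid
  constructor
  · intro hu
    have : (unbNhdsZero τ univ).IsCountablyGenerated := by
      rw [← nhds_zero_unbTopology hsolid]
      infer_instance
    exact exists_countable_closure_idealGenerated_eq_univ hsolid
  · rintro ⟨A, hA, hdense⟩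
    have := isCountablyGenerated_unbNhdsZero_univ hsolid hA hdense
    rw [← nhds_zero_unbTopology hsolid] at this
    exact @IsTopologicalAddGroup.metrizableSpace X _ (unbTopology τ univ)
      (isTopologicalAddGroup_unbTopology hsolid) (t0Space_unbTopology hsolid) this

/-- if `τ` is metrizable, then `u τ` is metrizable iff some at most
countable set generates a `τ`-dense ideal. -/
theorem stmt8 (hArch : VLArchimedean X) (τ : TopologicalSpace X)
    (hτ : IsLocallySolidTop τ) (hmet : @TopologicalSpace.MetrizableSpace X τ) :
    @TopologicalSpace.MetrizableSpace X (unbTopology τ Set.univ) ↔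
      ∃ A : Set X, A.Countable ∧ @closure X τ (idealGenerated A) = Set.univ :=
  stmt8_general τ hτ hmet
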